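/- (Lemma 3.3 of the paper, rigidity part.) Let W and V be finite-dimensional real inner product spaces with dim W = dim V = n, and let l : W → V be a linear map that is area-nonincreasing: ‖l(w_1)‖²‖l(w_2)‖² − ⟨l(w_1), l(w_2)⟩² ≤ ‖w_1‖²‖w_2‖² − ⟨w_1, w_2⟩² for all w_1, w_2 ∈ W. Let R : V × V × V × V → ℝ be an algebraic curvature tensor (multilinear, with R(x,y,z,w) = −R(y,x,z,w) = −R(x,y,w,z), R(x,y,z,w) = R(z,w,x,y), and R(x,y,z,w) + R(y,z,x,w) + R(z,x,y,w) = 0) such that R(x,y,y,x) ≥ 0 for all x, y ∈ V. Assume there is an orthonormal basis {v_1, …, v_n} of V such that for every unit vector x ∈ V: 0 < Σ_i R(v_i, x, x, v_i) < Σ_{i<j} R(v_i, v_j, v_j, v_i) (i.e., (scal/2)·g ≻ Ric ≻ 0). If there exist an orthonormal basis {w_1, …, w_n} of W and an orthonormal basis {v'_1, …, v'_n} of V with Σ_{i<j} R(l(w_i), l(w_j), l(w_j), l(w_i)) = Σ_{i<j} R(v'_i, v'_j, v'_j, v'_i), then l is a linear isometry, i.e., ‖l(w)‖ = ‖w‖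 for all w ∈ W. -/

import Mathlib

open Finset
open scoped RealInnerProductSpace

/-!
Diagonalise `l` by a singular value decomposition: `l eᵢ = λᵢ fᵢ` for orthonormal bases `e` of `W`
and `f` of `V`, with `λᵢ ≥ 0`. Put `Kᵢⱼ = R(fᵢ, fⱼ, fⱼ, fᵢ) ≥ 0`. Both traces are independent of
the orthonormal bases, so the equality reads `∑ λᵢ²λⱼ² Kᵢⱼ = ∑ Kᵢⱼ`, while area-nonincreasing
means `λᵢλⱼ ≤ 1` for `i ≠ j`; hence `λᵢλⱼ = 1` whenever `Kᵢⱼ > 0`, and `Ric > 0` gives every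
index `k` such a partner `j`. If `λₖ < 1`, its partner has `λⱼ > 1`, which forces `λₘ < 1` for all
`m ≠ j`; then `K p q = 0` unless `j ∈ {p, q}`, so `scal/2 ≤ Ric(fⱼ)`, contradicting `Ric < scal/2`.
Thus all `λₖ ≥ 1`, and `λⱼλₖ = 1` for partners forces `λₖ = 1`.
-/

theorem sum_sum_eq_two_nsmul_sum_sum_Ioi {ι M : Type*} [Fintype ι] [LinearOrder ι]
    [LocallyFiniteOrderTop ι] [AddCommMonoid M] (F : ι → ι → M)
    (hsymm : ∀ i j, F i j = F j i) (hdiag : ∀ i, F i i = 0) :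
    ∑ i, ∑ j, F i j = 2 • ∑ i, ∑ j ∈ Ioi i, F i j := by
  have hsplit : ∀ i j, F i j = (if i < j then F i j else 0) + (if j < i then F j i else 0) := by
    intro i j
    rcases lt_trichotomy i j with h | rfl | h
    · simp [h, h.not_gt]
    · simp [hdiag]
    · simp [h, h.not_gt, hsymm i j]
  calc ∑ i, ∑ j, F i j
      = ∑ i, ∑ j, (if i < j then F i j else 0) + ∑ i, ∑ j, (if j < i then F j i else 0) := by
        rw [← sum_add_distrib]
        refine sum_congr rfl fun i _ => ?_
        rw [← sum_add_distrib]
        exact sum_congr rfl fun j _ => hsplit i j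
    _ = ∑ i, ∑ j, (if i < j then F i j else 0) + ∑ j, ∑ i, (if j < i then F j i else 0) := by
        rw [sum_comm (s := univ) (t := univ) (f := fun i j => if j < i then F j i else 0)]
    _ = 2 • ∑ i, ∑ j ∈ Ioi i, F i j := by
        simp only [two_nsmul, ← sum_filter, filter_lt_eq_Ioi]

section Weights

variable {ι : Type*} [Fintype ι] {lam : ι → ℝ} {K : ι → ι → ℝ}

theorem sum_sum_le_two_mul_sum_of_eq_zero (hK0 : ∀ i j, 0 ≤ K i j)
    (hsymm : ∀ i j, K i j = K j i) (j₀ : ι) (hzero : ∀ p q, p ≠ j₀ → q ≠ j₀ → K p q = 0) :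
    ∑ i, ∑ j, K i j ≤ 2 * ∑ i, K i j₀ := by
  classical
  calc ∑ i, ∑ j, K i j
      ≤ ∑ i, ∑ j, ((if j = j₀ then K i j else 0) + (if i = j₀ then K i j else 0)) := by
        gcongr with i _ j _
        by_cases hi : i = j₀ <;> by_cases hj : j = j₀ <;> simp [hi, hj, hzero, hK0]
    _ = 2 * ∑ i, K i j₀ := by
        simp only [sum_add_distrib, sum_ite_eq', mem_univ, if_true]
        rw [sum_comm]
        simp only [sum_ite_eq', mem_univ, if_true, hsymm j₀]
        ring

theorem mul_eq_one_of_sum_sum_eq (hlam0 : ∀ i, 0 ≤ lam i)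
    (harea : ∀ i j, i ≠ j → lam i * lam j ≤ 1) (hK0 : ∀ i j, 0 ≤ K i j)
    (hdiag : ∀ i, K i i = 0)
    (hsum : ∑ i, ∑ j, (lam i * lam j) ^ 2 * K i j = ∑ i, ∑ j, K i j) {i j : ι}
    (hij : 0 < K i j) : lam i * lam j = 1 := by
  have hle : ∀ i j, (lam i * lam j) ^ 2 * K i j ≤ K i j := by
    intro i j
    rcases eq_or_ne i j with rfl | hne
    · simp [hdiag]
    · have hsq : (lam i * lam j) ^ 2 ≤ 1 := by
        nlinarith [harea i j hne, mul_nonneg (hlam0 i) (hlam0 j)]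
      nlinarith [mul_le_mul_of_nonneg_right hsq (hK0 i j)]
  have hrow := (sum_eq_sum_iff_of_le fun i _ => sum_le_sum fun j _ => hle i j).mp hsum i
    (mem_univ i)
  have hsq : (lam i * lam j) ^ 2 = 1 := by
    have := (sum_eq_sum_iff_of_le fun j _ => hle i j).mp hrow j (mem_univ j)
    nlinarith
  nlinarith [mul_nonneg (hlam0 i) (hlam0 j)]

theorem one_le_of_edge_mul_eq_one (hlam0 : ∀ i, 0 ≤ lam i)
    (harea : ∀ i j, i ≠ j → lam i * lam j ≤ 1) (hK0 : ∀ i j, 0 ≤ K i j)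
    (hsymm : ∀ i j, K i j = K j i) (hedge : ∀ i j, 0 < K i j → lam i * lam j = 1)
    (hnbr : ∀ k, ∃ j, 0 < K j k) (hlt : ∀ k, 2 * ∑ i, K i k < ∑ i, ∑ j, K i j) (k : ι) :
    1 ≤ lam k := by
  by_contra! hk
  obtain ⟨j₀, hj₀k⟩ := hnbr k
  have hprod := hedge j₀ k hj₀k
  have hj₀ : 1 < lam j₀ := by nlinarith [hlam0 j₀, hlam0 k]
  have hsmall : ∀ m, m ≠ j₀ → lam m < 1 := fun m hm => by
    nlinarith [harea j₀ m (Ne.symm hm), hlam0 m]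
  have hzero : ∀ p q, p ≠ j₀ → q ≠ j₀ → K p q = 0 := by
    intro p q hp hq
    by_contra hne
    have := hedge p q ((hK0 p q).lt_of_ne' hne)
    nlinarith [hsmall p hp, hsmall q hq, hlam0 p, hlam0 q]
  linarith [hlt j₀, sum_sum_le_two_mul_sum_of_eq_zero hK0 hsymm j₀ hzero]

theorem eq_one_of_sum_sum_sq_mul_eq (hlam0 : ∀ i, 0 ≤ lam i)
    (harea : ∀ i j, i ≠ j → lam i * lam j ≤ 1) (hK0 : ∀ i j, 0 ≤ K i j)
    (hsymm : ∀ i j, K i j = K j i) (hdiag : ∀ i, K i i = 0)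
    (hsum : ∑ i, ∑ j, (lam i * lam j) ^ 2 * K i j = ∑ i, ∑ j, K i j)
    (hpos : ∀ k, 0 < ∑ i, K i k) (hlt : ∀ k, 2 * ∑ i, K i k < ∑ i, ∑ j, K i j) (k : ι) :
    lam k = 1 := by
  have hedge : ∀ i j, 0 < K i j → lam i * lam j = 1 := fun i j =>
    mul_eq_one_of_sum_sum_eq hlam0 harea hK0 hdiag hsum
  have hnbr : ∀ k, ∃ j, 0 < K j k := fun k => by
    simpa using exists_lt_of_sum_lt (s := univ) (f := fun _ => 0) (by simpa using hpos k)
  have hone := one_le_of_edge_mul_eq_one hlam0 harea hK0 hsymm hedge hnbr hlt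
  obtain ⟨j, hjk⟩ := hnbr k
  nlinarith [hedge j k hjk, hone j, hone k]

end Weights

section InnerProductSpace

variable {E F M : Type*} [NormedAddCommGroup E] [InnerProductSpace ℝ E]
  [NormedAddCommGroup F] [InnerProductSpace ℝ F] [AddCommGroup M] [Module ℝ M]
  {ι κ : Type*} [Fintype ι] [Fintype κ]

theorem OrthonormalBasis.sum_apply_self_eq (b : OrthonormalBasis ι ℝ E)
    (c : OrthonormalBasis κ ℝ E) (B : E →ₗ[ℝ] E →ₗ[ℝ] M) :
    ∑ i, B (b i) (b i) = ∑ k, B (c k) (c k) := by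
  calc ∑ i, B (b i) (b i)
      = ∑ i, B (∑ k, ⟪c k, b i⟫ • c k) (b i) := by simp only [c.sum_repr']
    _ = ∑ k, B (c k) (∑ i, ⟪b i, c k⟫ • b i) := by
        simp only [map_sum, map_smul, LinearMap.sum_apply, LinearMap.smul_apply, real_inner_comm]
        exact sum_comm
    _ = ∑ k, B (c k) (c k) := by simp only [b.sum_repr']

theorem OrthonormalBasis.sum_sum_apply_comp_eq (b : OrthonormalBasis ι ℝ E)
    (c : OrthonormalBasis κ ℝ E) (L : E →ₗ[ℝ] F) (R : F →ₗ[ℝ] F →ₗ[ℝ] F →ₗ[ℝ] F →ₗ[ℝ] ℝ) :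
    ∑ i, ∑ j, R (L (b i)) (L (b j)) (L (b j)) (L (b i)) =
      ∑ i, ∑ j, R (L (c i)) (L (c j)) (L (c j)) (L (c i)) := by
  -- the bilinear forms `(u, v) ↦ R (L u) y y (L v)` and `(u, v) ↦ R z (L u) (L v) z`
  calc ∑ i, ∑ j, R (L (b i)) (L (b j)) (L (b j)) (L (b i))
      = ∑ j, ∑ i, R (L (c i)) (L (b j)) (L (b j)) (L (c i)) := by
        rw [sum_comm]
        exact sum_congr rfl fun j _ =>
          b.sum_apply_self_eq c (((R.flip (L (b j))).flip (L (b j))).compl₁₂ L L)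
    _ = ∑ i, ∑ j, R (L (c i)) (L (c j)) (L (c j)) (L (c i)) := by
        rw [sum_comm]
        exact sum_congr rfl fun i _ =>
          b.sum_apply_self_eq c (((R (L (c i))).compl₁₂ L L).compr₂ (LinearMap.applyₗ (L (c i))))

theorem OrthonormalBasis.two_mul_sum_sum_Ioi_apply_comp_eq [LinearOrder ι]
    [LocallyFiniteOrderTop ι] {R : F →ₗ[ℝ] F →ₗ[ℝ] F →ₗ[ℝ] F →ₗ[ℝ] ℝ}
    (hdiag : ∀ x, R x x x x = 0) (hsymm : ∀ x y, R x y y x = R y x x y)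
    (b : OrthonormalBasis ι ℝ E) (c : OrthonormalBasis κ ℝ E) (L : E →ₗ[ℝ] F) :
    2 * ∑ i, ∑ j ∈ Ioi i, R (L (b i)) (L (b j)) (L (b j)) (L (b i)) =
      ∑ i, ∑ j, R (L (c i)) (L (c j)) (L (c j)) (L (c i)) := by
  rw [← b.sum_sum_apply_comp_eq c, sum_sum_eq_two_nsmul_sum_sum_Ioi _
    (fun _ _ => hsymm _ _) (fun _ => hdiag _), two_nsmul, two_mul]

theorem norm_mul_norm_le_one_of_area_le {l : E →ₗ[ℝ] F}
    (hl : ∀ w₁ w₂ : E,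
      ‖l w₁‖ ^ 2 * ‖l w₂‖ ^ 2 - ⟪l w₁, l w₂⟫ ^ 2 ≤ ‖w₁‖ ^ 2 * ‖w₂‖ ^ 2 - ⟪w₁, w₂⟫ ^ 2)
    (e : OrthonormalBasis ι ℝ E) (f : OrthonormalBasis ι ℝ F)
    (hef : ∀ i, l (e i) = ‖l (e i)‖ • f i) {i j : ι} (hij : i ≠ j) :
    ‖l (e i)‖ * ‖l (e j)‖ ≤ 1 := by
  have himg : ⟪l (e i), l (e j)⟫ = 0 := by
    rw [hef i, hef j, real_inner_smul_left, real_inner_smul_right, f.orthonormal.2 hij,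
      mul_zero, mul_zero]
  have h := hl (e i) (e j)
  rw [e.orthonormal.1 i, e.orthonormal.1 j, e.orthonormal.2 hij, himg] at h
  nlinarith [mul_nonneg (norm_nonneg (l (e i))) (norm_nonneg (l (e j)))]

theorem LinearMap.exists_orthonormalBasis_apply_eq_norm_smul [FiniteDimensional ℝ E]
    [FiniteDimensional ℝ F] {n : ℕ} (hE : Module.finrank ℝ E = n) (hF : Module.finrank ℝ F = n)
    (l : E →ₗ[ℝ] F) :
    ∃ (e : OrthonormalBasis (Fin n) ℝ E) (f : OrthonormalBasis (Fin n) ℝ F),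
      ∀ i, l (e i) = ‖l (e i)‖ • f i := by
  have hsymm := l.isSymmetric_adjoint_comp_self
  set e := hsymm.eigenvectorBasis hE
  have horth : ∀ i j, i ≠ j → ⟪l (e i), l (e j)⟫ = 0 := fun i j hij => by
    rw [← l.adjoint_inner_right, ← LinearMap.comp_apply, hsymm.apply_eigenvectorBasis,
      real_inner_smul_right, e.orthonormal.2 hij, mul_zero]
  have hunit : Orthonormal ℝ ({i | l (e i) ≠ 0}.domRestrict fun i => ‖l (e i)‖⁻¹ • l (e i)) := by
    refine ⟨fun ⟨i, hi⟩ => ?_, fun ⟨i, _⟩ ⟨j, _⟩ hij => ?_⟩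
    · simp [Set.domRestrict_apply, norm_smul, inv_mul_cancel₀ (norm_ne_zero_iff.mpr hi)]
    · simp [Set.domRestrict_apply, real_inner_smul_left, real_inner_smul_right,
        horth i j fun h => hij (Subtype.ext h)]
  obtain ⟨f, hf⟩ := hunit.exists_orthonormalBasis_extension_of_card_eq (by simpa using hF)
  refine ⟨e, f, fun i => ?_⟩
  by_cases h : l (e i) = 0
  · simp [h]
  · rw [hf i h, smul_smul, mul_inv_cancel₀ (norm_ne_zero_iff.mpr h), one_smul]

end InnerProductSpace

theorem trace_equality_rigidity_general
    {W V : Type*} [NormedAddCommGroup W] [InnerProductSpace ℝ W]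
    [NormedAddCommGroup V] [InnerProductSpace ℝ V]
    [FiniteDimensional ℝ W] [FiniteDimensional ℝ V]
    {n : ℕ}
    (hW : Module.finrank ℝ W = n) (hV : Module.finrank ℝ V = n)
    (l : W →ₗ[ℝ] V)
    (hl : ∀ w₁ w₂ : W,
      ‖l w₁‖ ^ 2 * ‖l w₂‖ ^ 2 - ⟪l w₁, l w₂⟫ ^ 2 ≤
        ‖w₁‖ ^ 2 * ‖w₂‖ ^ 2 - ⟪w₁, w₂⟫ ^ 2)
    (R : V →ₗ[ℝ] V →ₗ[ℝ] V →ₗ[ℝ] V →ₗ[ℝ] ℝ)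
    (hR1 : ∀ x y z w : V, R x y z w = -R y x z w)
    (hR3 : ∀ x y z w : V, R x y z w = R z w x y)
    (hsec : ∀ x y : V, 0 ≤ R x y y x)
    (hpinch : ∃ v : OrthonormalBasis (Fin n) ℝ V, ∀ x : V, ‖x‖ = 1 →
      0 < ∑ i, R (v i) x x (v i) ∧
        ∑ i, R (v i) x x (v i) < ∑ i, ∑ j ∈ Ioi i, R (v i) (v j) (v j) (v i))
    (heq : ∃ (w : OrthonormalBasis (Fin n) ℝ W) (v' : OrthonormalBasis (Fin n) ℝ V),
      ∑ i, ∑ j ∈ Ioi i, R (l (w i)) (l (w j)) (l (w j)) (l (w i)) =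
        ∑ i, ∑ j ∈ Ioi i, R (v' i) (v' j) (v' j) (v' i)) :
    ∀ w : W, ‖l w‖ = ‖w‖ := by
  obtain ⟨v, hv⟩ := hpinch
  obtain ⟨w, v', hwv⟩ := heq
  obtain ⟨e, f, hef⟩ := l.exists_orthonormalBasis_apply_eq_norm_smul hW hV
  have hdiag : ∀ x, R x x x x = 0 := fun x => by linarith [hR1 x x x x]
  have hsymm : ∀ x y, R x y y x = R y x x y := fun x y => hR3 x y y x
  set lam : Fin n → ℝ := fun i => ‖l (e i)‖
  set K : Fin n → Fin n → ℝ := fun i j => R (f i) (f j) (f j) (f i)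
  have hscal (b : OrthonormalBasis (Fin n) ℝ V) :
      2 * ∑ i, ∑ j ∈ Ioi i, R (b i) (b j) (b j) (b i) = ∑ i, ∑ j, K i j := by
    simpa using b.two_mul_sum_sum_Ioi_apply_comp_eq hdiag hsymm f LinearMap.id
  have hric (k : Fin n) : 0 < ∑ i, K i k ∧ 2 * ∑ i, K i k < ∑ i, ∑ j, K i j := by
    have hbasis : ∑ i, R (v i) (f k) (f k) (v i) = ∑ i, K i k :=
      v.sum_apply_self_eq f ((R.flip (f k)).flip (f k))
    obtain ⟨hpos, hlt⟩ := hv (f k) (f.orthonormal.1 k)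
    exact ⟨hbasis ▸ hpos, by linarith [hscal v]⟩
  have hexpand (i j : Fin n) :
      R (l (e i)) (l (e j)) (l (e j)) (l (e i)) = (lam i * lam j) ^ 2 * K i j := by
    rw [hef i, hef j]
    simp only [map_smul, LinearMap.smul_apply, smul_eq_mul, K]
    ring
  have hsum : ∑ i, ∑ j, (lam i * lam j) ^ 2 * K i j = ∑ i, ∑ j, K i j :=
    calc ∑ i, ∑ j, (lam i * lam j) ^ 2 * K i j
        = ∑ i, ∑ j, R (l (e i)) (l (e j)) (l (e j)) (l (e i)) := by simp only [hexpand]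
      _ = 2 * ∑ i, ∑ j ∈ Ioi i, R (l (w i)) (l (w j)) (l (w j)) (l (w i)) :=
        (w.two_mul_sum_sum_Ioi_apply_comp_eq hdiag hsymm e l).symm
      _ = ∑ i, ∑ j, K i j := by rw [hwv, hscal]
  have hone := eq_one_of_sum_sum_sq_mul_eq (fun i => norm_nonneg (l (e i)))
    (fun i j => norm_mul_norm_le_one_of_area_le hl e f hef) (fun i j => hsec _ _)
    (fun i j => hsymm _ _) (fun i => hdiag _) hsum (fun k => (hric k).1) (fun k => (hric k).2)
  have himage : Orthonormal ℝ (l ∘ e.toBasis) := by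
    convert f.orthonormal using 1
    funext i
    simpa [hone i] using hef i
  exact (l.isometryOfOrthonormal e.orthonormal himage).norm_map

/-- **Lemma 3.3 of the paper, rigidity part.**
Let `l : W → V` be an area-nonincreasing linear map between `n`-dimensional real inner
product spaces, and let `R` be an algebraic curvature tensor on `V` with `sec ≥ 0`
satisfying `(scal/2)·g ≻ Ric ≻ 0` (expressed via an orthonormal basis `v`).  If
equality `tr(L* ∘ R ∘ L) = scal/2` holds (for some orthonormal bases `w` of `W` and
`v'` of `V`), then `l` is a linear isometry. -/
theorem trace_equality_rigidity
    {W V : Type*} [NormedAddCommGroup W] [InnerProductSpace ℝ W]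
    [NormedAddCommGroup V] [InnerProductSpace ℝ V]
    [FiniteDimensional ℝ W] [FiniteDimensional ℝ V]
    {n : ℕ}
    (hW : Module.finrank ℝ W = n) (hV : Module.finrank ℝ V = n)
    (l : W →ₗ[ℝ] V)
    (hl : ∀ w₁ w₂ : W,
      ‖l w₁‖ ^ 2 * ‖l w₂‖ ^ 2 - ⟪l w₁, l w₂⟫ ^ 2 ≤
        ‖w₁‖ ^ 2 * ‖w₂‖ ^ 2 - ⟪w₁, w₂⟫ ^ 2)
    (R : V →ₗ[ℝ] V →ₗ[ℝ] V →ₗ[ℝ] V →ₗ[ℝ] ℝ)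
    (hR1 : ∀ x y z w : V, R x y z w = -R y x z w)
    (hR2 : ∀ x y z w : V, R x y z w = -R x y w z)
    (hR3 : ∀ x y z w : V, R x y z w = R z w x y)
    (hRb : ∀ x y z w : V, R x y z w + R y z x w + R z x y w = 0)
    (hsec : ∀ x y : V, 0 ≤ R x y y x)
    (hpinch : ∃ v : OrthonormalBasis (Fin n) ℝ V, ∀ x : V, ‖x‖ = 1 →
      0 < ∑ i, R (v i) x x (v i) ∧
        ∑ i, R (v i) x x (v i) < ∑ i, ∑ j ∈ Ioi i, R (v i) (v j) (v j) (v i))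
    (heq : ∃ (w : OrthonormalBasis (Fin n) ℝ W) (v' : OrthonormalBasis (Fin n) ℝ V),
      ∑ i, ∑ j ∈ Ioi i, R (l (w i)) (l (w j)) (l (w j)) (l (w i)) =
        ∑ i, ∑ j ∈ Ioi i, R (v' i) (v' j) (v' j) (v' i)) :
    ∀ w : W, ‖l w‖ = ‖w‖ :=
  trace_equality_rigidity_general hW hV l hl R hR1 hR3 hsec hpinch heq
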